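/- Parametrized fixed points preserve naturality: if α_{X,Y} : hom(FX,FY) × hom(GX,GY) → hom(FX,FY) is a family of Scott-continuous maps natural in X and Y, in the sense that α_{X',Y'}(Ff ∘ h ∘ Fg, Gf ∘ p ∘ Gg) = Ff ∘ α_{X,Y}(h, p) ∘ Fg for all f : Y → Y', g : X' → X, then the family pfix α_{X,Y} : hom(GX,GY) → hom(FX,FY) is natural: (pfix α_{X',Y'})(Gf ∘ p ∘ Gg) = Ff ∘ (pfix α_{X,Y})(p) ∘ Fg. -/

import Mathlib

open CategoryTheory

universe v u

/-- The `n`-fold parametrized iterate: `α⁰(x,p) = x`, `α^{n+1}(x,p) = α(αⁿ(x,p), p)`. -/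
def pIter {A B : Type*} (α : A × B → A) : ℕ → A → B → A
  | 0, x, _ => x
  | n + 1, x, p => α (pIter α n x p, p)

/-!
Conjugation `h ↦ Ff ∘ h ∘ Fg` is strict and Scott-continuous, and by naturality of `α` it
intertwines the iterates: `αⁿ_{X',Y'}(⊥, Gf ∘ p ∘ Gg) = Ff ∘ αⁿ_{X,Y}(⊥, p) ∘ Fg`.
The iterates form an increasing chain, so conjugation carries their supremum to the supremum
of the conjugated chain.
-/

lemma ScottContinuous.map_sSup_range {ι α β : Type*} [Nonempty ι]
    [CompletePartialOrder α] [CompletePartialOrder β] {f : α → β} (hf : ScottContinuous f)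
    {u : ι → α} (hu : Directed (· ≤ ·) u) :
    f (sSup (Set.range u)) = sSup (Set.range (f ∘ u)) := by
  have hd := hu.directedOn_range
  have hfd := (hu.mono_comp _ fun _ _ h => hf.monotone h).directedOn_range
  rw [Set.range_comp] at hfd ⊢
  exact (hf (Set.range_nonempty u) hd hd.isLUB_sSup).unique hfd.isLUB_sSup

lemma pIter_map {A A' B B' : Type*} {α : A × B → A} {α' : A' × B' → A'}
    {φ : A → A'} {ψ : B → B'} (h : ∀ x p, α' (φ x, ψ p) = φ (α (x, p))) (n : ℕ) (x : A) (p : B) :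
    pIter α' n (φ x) (ψ p) = φ (pIter α n x p) := by
  induction n with
  | zero => rfl
  | succ n ih => simp only [pIter, ih, h]

lemma monotone_pIter_bot {A B : Type*} [Preorder A] [OrderBot A] [Preorder B]
    {α : A × B → A} (hα : Monotone α) (p : B) : Monotone fun n => pIter α n ⊥ p := by
  refine monotone_nat_of_le_succ fun n => ?_
  induction n with
  | zero => exact bot_le
  | succ n ih => exact hα (Prod.mk_le_mk.mpr ⟨ih, le_rfl⟩)

/-- Parametrized fixed points preserve naturality: if
`α_{X,Y} : hom(FX,FY) × hom(GX,GY) → hom(FX,FY)` is a family of Scott-continuous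
maps natural in `X` and `Y`, in the sense that
`α_{X',Y'}(Ff ∘ h ∘ Fg, Gf ∘ p ∘ Gg) = Ff ∘ α_{X,Y}(h,p) ∘ Fg` for all
`f : Y ⟶ Y'`, `g : X' ⟶ X`, then the family
`pfix α_{X,Y} : hom(GX,GY) → hom(FX,FY)`, with `(pfix α)(p) = sup_n αⁿ(⊥,p)`,
is natural: `(pfix α_{X',Y'})(Gf ∘ p ∘ Gg) = Ff ∘ (pfix α_{X,Y})(p) ∘ Fg`. -/
theorem pfix_preserves_naturality {C : Type u} [Category.{v} C]
    [∀ X Y : C, CompletePartialOrder (X ⟶ Y)] [∀ X Y : C, OrderBot (X ⟶ Y)]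
    (comp_cont : ∀ {X Y Z : C} (f : X ⟶ Y), ScottContinuous (fun g : Y ⟶ Z => f ≫ g))
    (comp_cont' : ∀ {X Y Z : C} (g : Y ⟶ Z), ScottContinuous (fun f : X ⟶ Y => f ≫ g))
    (comp_strict : ∀ {X Y Z : C} (f : X ⟶ Y) (g : Y ⟶ Z),
      f ≫ (⊥ : Y ⟶ Z) = (⊥ : X ⟶ Z) ∧ (⊥ : X ⟶ Y) ≫ g = (⊥ : X ⟶ Z))
    (F G : C ⥤ C)
    (α : ∀ X Y : C, (F.obj X ⟶ F.obj Y) × (G.obj X ⟶ G.obj Y) → (F.obj X ⟶ F.obj Y))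
    (hcont : ∀ X Y : C, ScottContinuous (α X Y))
    (hnat : ∀ {X X' Y Y' : C} (f : Y ⟶ Y') (g : X' ⟶ X)
      (h : F.obj X ⟶ F.obj Y) (p : G.obj X ⟶ G.obj Y),
      α X' Y' (F.map g ≫ h ≫ F.map f, G.map g ≫ p ≫ G.map f) =
        F.map g ≫ α X Y (h, p) ≫ F.map f) :
    ∀ {X X' Y Y' : C} (f : Y ⟶ Y') (g : X' ⟶ X) (p : G.obj X ⟶ G.obj Y),
      sSup (Set.range fun n => pIter (α X' Y') n ⊥ (G.map g ≫ p ≫ G.map f)) =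
        F.map g ≫ sSup (Set.range fun n => pIter (α X Y) n ⊥ p) ≫ F.map f := by
  intro X X' Y Y' f g p
  let conj : (F.obj X ⟶ F.obj Y) → (F.obj X' ⟶ F.obj Y') := fun h => F.map g ≫ h ≫ F.map f
  have conj_cont : ScottContinuous conj :=
    (comp_cont' (F.map f)).comp (comp_cont (F.map g))
  have conj_bot : conj ⊥ = ⊥ := by
    rw [← (comp_strict (F.map g) (⊥ : F.obj X ⟶ F.obj Y')).1,
      ← (comp_strict (⊥ : F.obj X ⟶ F.obj Y) (F.map f)).2]
  have iter_conj (n : ℕ) :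
      pIter (α X' Y') n ⊥ (G.map g ≫ p ≫ G.map f) = conj (pIter (α X Y) n ⊥ p) := by
    rw [← conj_bot]
    exact pIter_map (hnat f g) n ⊥ p
  have chain := (monotone_pIter_bot (hcont X Y).monotone p).directed_le
  simp_rw [iter_conj]
  exact (conj_cont.map_sSup_range chain).symm
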